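/- Let Γ be a finite connected simplicial graph with no SIL whose vertices are labeled by nontrivial cyclic groups. Then the image of the homomorphism f̃: G_{Γ₀} → G_{Γ̃} determined by v ↦ p_v is a normal subgroup of G_{Γ̃}. -/

import Mathlib

/-!
The image of `f̃` is generated by the `p_u`, `u ∉ Δ`, and `G_{Γ̃}` by the `p_{v,C}`, so it
suffices to conjugate each `p_u` by each `p_{v,C}^{±1}`. If `u ∉ C`, then `p_{v,C}` commutes with
every factor `p_{u,C'}` of `p_u`. If `u ∈ C`, then `u` lies in no other component `D` of
`Γ ∖ st(v)`, so `p_u` commutes with every other factor `p_{v,D}` of `p_v` and conjugation by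
`p_{v,C}` agrees with conjugation by `p_v` on `p_u`; moreover `v ∉ Δ`, as `u ∉ st(v)`.
-/

open Monoid

namespace ArXiv

universe u uG

variable {V : Type u}

/-- The star of a vertex: the vertex together with its neighbors. -/
def star (Γ : SimpleGraph V) (v : V) : Set V := insert v (Γ.neighborSet v)

/-- `C ⊆ V` is the vertex set of a connected component of the full subgraph of `Γ`
induced on `S`. -/
def IsCompOf (Γ : SimpleGraph V) (S : Set V) (C : Set V) : Prop :=
  ∃ c : (Γ.induce S).ConnectedComponent, C = Subtype.val '' c.supp

/-- `Γ` has a separating intersection of links: there are distinct non-adjacent vertices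
`v, w` such that some connected component of `Γ ∖ (lk(v) ∩ lk(w))` contains neither `v`
nor `w`. -/
def HasSIL (Γ : SimpleGraph V) : Prop :=
  ∃ v w : V, v ≠ w ∧ ¬ Γ.Adj v w ∧
    ∃ C : Set V, IsCompOf Γ ((Γ.neighborSet v ∩ Γ.neighborSet w)ᶜ) C ∧ v ∉ C ∧ w ∉ C

variable (Γ : SimpleGraph V) (G : V → Type uG) [∀ v, Group (G v)]

/-- The commutator relators defining the graph product. -/
def rels : Set (Monoid.CoprodI G) :=
  {x | ∃ (v w : V) (_ : Γ.Adj v w) (g : G v) (h : G w),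
    x = CoprodI.of g * CoprodI.of h * (CoprodI.of g)⁻¹ * (CoprodI.of h)⁻¹}

/-- The graph product of the vertex groups `G v` over the graph `Γ`: the quotient of the
free product by the normal closure of the commutators of adjacent vertex groups. -/
def GraphProduct : Type (max u uG) :=
  Monoid.CoprodI G ⧸ Subgroup.normalClosure (rels Γ G)

instance : Group (GraphProduct Γ G) :=
  inferInstanceAs (Group (Monoid.CoprodI G ⧸ Subgroup.normalClosure (rels Γ G)))

/-- The canonical map from a vertex group into the graph product. -/
def of {v : V} : G v →* GraphProduct Γ G :=
  (QuotientGroup.mk' (Subgroup.normalClosure (rels Γ G))).comp CoprodI.of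

theorem of_commute {v w : V} (h : Γ.Adj v w) (g : G v) (k : G w) :
    Commute (of Γ G g) (of Γ G k) := by
  rw [← commutatorElement_eq_one_iff_commute]
  have hmem : (CoprodI.of g * CoprodI.of k * (CoprodI.of g)⁻¹ * (CoprodI.of k)⁻¹ :
      Monoid.CoprodI G) ∈ Subgroup.normalClosure (rels Γ G) :=
    Subgroup.subset_normalClosure ⟨v, w, h, g, k, rfl⟩
  have h1 : (QuotientGroup.mk' (Subgroup.normalClosure (rels Γ G)))
      (CoprodI.of g * CoprodI.of k * (CoprodI.of g)⁻¹ * (CoprodI.of k)⁻¹) = 1 :=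
    (QuotientGroup.eq_one_iff _).mpr hmem
  simp only [map_mul, map_inv] at h1
  rw [commutatorElement_def]
  exact h1

/-- `π` is the partial conjugation `π_{v,C}`, for vertex groups with chosen generators
`gen`: it conjugates the generators in `C` by (the generator of) `v` and fixes all other
generators. -/
def IsPartialConj (gen : ∀ v, G v) (π : MulAut (GraphProduct Γ G)) (v : V) (C : Set V) :
    Prop :=
  (∀ u ∈ C, ∀ g : G u, π (of Γ G g) = of Γ G (gen v) * of Γ G g * (of Γ G (gen v))⁻¹) ∧
  (∀ u ∉ C, ∀ g : G u, π (of Γ G g) = of Γ G g)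

/-- `π` is the partial conjugation `π_{a,C}` by the element `a` of the vertex group `G v`:
it conjugates the vertex groups in `C` by `a` and fixes all other vertex groups. -/
def IsPartialConjBy {v : V} (a : G v) (π : MulAut (GraphProduct Γ G)) (C : Set V) : Prop :=
  (∀ u ∈ C, ∀ g : G u, π (of Γ G g) = of Γ G a * of Γ G g * (of Γ G a)⁻¹) ∧
  (∀ u ∉ C, ∀ g : G u, π (of Γ G g) = of Γ G g)

/-- The vertex set of the graph `Γ̃`: pairs `p_{v,C}` where `C` is a connected component
of `Γ ∖ st(v)`. -/
def TV : Type u := {p : V × Set V // IsCompOf Γ ((star Γ p.1)ᶜ) p.2}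

/-- The graph `Γ̃`: vertices `p_{v,C}` and `p_{w,D}` are joined by an edge unless
`v, w` are distinct non-adjacent vertices with `v ∈ D` and `w ∈ C`. -/
def tilde : SimpleGraph (TV Γ) where
  Adj p q := p ≠ q ∧
    ¬(p.1.1 ≠ q.1.1 ∧ ¬ Γ.Adj p.1.1 q.1.1 ∧ p.1.1 ∈ q.1.2 ∧ q.1.1 ∈ p.1.2)
  symm := by
    constructor
    rintro p q ⟨h1, h2⟩
    exact ⟨h1.symm, fun ⟨a, b, c, d⟩ => h2 ⟨a.symm, fun e => b e.symm, d, c⟩⟩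
  loopless := ⟨fun p h => h.1 rfl⟩

/-- The graph product `G_{Γ̃}`, where the vertex `p_{v,C}` is labeled by (a copy of) the
group `G v`. -/
abbrev TildeProduct : Type (max u uG) :=
  GraphProduct (tilde Γ) (fun p : TV Γ => G p.1.1)

/-- The element `p_v = ∏_C p_{v,C} ∈ G_{Γ̃}`, the product over all connected components
`C` of `Γ ∖ st(v)` (the factors pairwise commute). -/
noncomputable def pvert [Finite V] (gen : ∀ v, G v) (v : V) : TildeProduct Γ G :=
  haveI : Fintype {C : Set V // IsCompOf Γ ((star Γ v)ᶜ) C} := Fintype.ofFinite _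
  Finset.noncommProd (Finset.univ : Finset {C : Set V // IsCompOf Γ ((star Γ v)ᶜ) C})
    (fun c => of (tilde Γ) (fun p : TV Γ => G p.1.1) (v := ⟨(v, c.1), c.2⟩) (gen v))
    (by
      intro a _ b _ hab
      have hadj : (tilde Γ).Adj ⟨(v, a.1), a.2⟩ ⟨(v, b.1), b.2⟩ := by
        show _ ≠ _ ∧ _
        refine ⟨fun h => hab (Subtype.ext (congrArg (fun x : TV Γ => x.1.2) h)), ?_⟩
        rintro ⟨hne, -⟩
        exact hne rfl
      exact of_commute (tilde Γ) (fun p : TV Γ => G p.1.1) hadj (gen v) (gen v))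

/-- The set `Δ` of vertices adjacent to every other vertex of `Γ`. -/
def Delta (Γ : SimpleGraph V) : Set V := {v | ∀ u, u ≠ v → Γ.Adj v u}

/-- The subgroup of the graph product generated by the vertex groups `G v`, `v ∈ T`. -/
def vertexSubgroup (T : Set V) : Subgroup (GraphProduct Γ G) :=
  Subgroup.closure {x | ∃ v ∈ T, ∃ g : G v, x = of Γ G g}

/-- `w` is a reduced word for the element `g` of the graph product: a minimal length
expression of `g` as a product of nontrivial elements of vertex groups. -/
def IsReducedWord (g : GraphProduct Γ G) (w : List (Σ v : V, G v)) : Prop :=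
  (w.map fun l => of Γ G l.2).prod = g ∧ (∀ l ∈ w, l.2 ≠ 1) ∧
    ∀ w' : List (Σ v : V, G v), (w'.map fun l => of Γ G l.2).prod = g →
      w.length ≤ w'.length

theorem closure_range_of_gen_eq_top (gen : ∀ v, G v)
    (hgen : ∀ v, Subgroup.zpowers (gen v) = ⊤) :
    Subgroup.closure (Set.range fun v => of Γ G (gen v)) = ⊤ := by
  rw [eq_top_iff]
  rintro x -
  obtain ⟨y, rfl⟩ := QuotientGroup.mk'_surjective (Subgroup.normalClosure (rels Γ G)) x
  induction y using Monoid.CoprodI.induction_on with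
  | one => rw [map_one]; exact Subgroup.one_mem _
  | of v g =>
    obtain ⟨n, rfl⟩ := Subgroup.mem_zpowers_iff.mp (by rw [hgen v]; exact Subgroup.mem_top g)
    rw [map_zpow]
    exact Subgroup.zpow_mem _ (Subgroup.subset_closure (Set.mem_range_self v)) n
  | mul a b ha hb => rw [map_mul]; exact Subgroup.mul_mem _ ha hb

theorem Subgroup.conj_mem_closure {M : Type*} [Group M] {S : Set M} {x : M}
    (h : ∀ s ∈ S, x * s * x⁻¹ ∈ Subgroup.closure S) {g : M}
    (hg : g ∈ Subgroup.closure S) :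
    x * g * x⁻¹ ∈ Subgroup.closure S := by
  have hmap : (Subgroup.closure S).map (MulAut.conj x).toMonoidHom ≤ Subgroup.closure S := by
    rw [MonoidHom.map_closure, Subgroup.closure_le]
    rintro _ ⟨s, hs, rfl⟩
    exact h s hs
  exact hmap ⟨g, hg, rfl⟩

theorem Subgroup.closure_normal_of_conj_mem {M : Type*} [Group M] {S T : Set M}
    (hT : Subgroup.closure T = ⊤)
    (h : ∀ t ∈ T, ∀ s ∈ S,
      t * s * t⁻¹ ∈ Subgroup.closure S ∧ t⁻¹ * s * t ∈ Subgroup.closure S) :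
    (Subgroup.closure S).Normal := by
  rw [← Subgroup.normalizer_eq_top_iff, eq_top_iff, ← hT, Subgroup.closure_le]
  intro t ht g
  refine ⟨Subgroup.conj_mem_closure fun s hs => (h t ht s hs).1, fun hg => ?_⟩
  have := Subgroup.conj_mem_closure (x := t⁻¹) (fun s hs => by simpa using (h t ht s hs).2) hg
  simpa [mul_assoc] using this

section Tilde

variable {Γ G}

theorem IsCompOf.subset {S C : Set V} (h : IsCompOf Γ S C) : C ⊆ S := by
  obtain ⟨c, rfl⟩ := h
  rintro _ ⟨x, -, rfl⟩
  exact x.2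

theorem IsCompOf.eq_of_mem {S C D : Set V} (hC : IsCompOf Γ S C) (hD : IsCompOf Γ S D)
    {u : V} (huC : u ∈ C) (huD : u ∈ D) : C = D := by
  obtain ⟨c, rfl⟩ := hC
  obtain ⟨d, rfl⟩ := hD
  obtain ⟨x, hx, rfl⟩ := huC
  obtain ⟨y, hy, hyx⟩ := huD
  obtain rfl : y = x := Subtype.ext hyx
  rw [SimpleGraph.ConnectedComponent.mem_supp_iff] at hx hy
  rw [← hx, ← hy]

theorem notMem_delta_of_mem (q : TV Γ) {u : V} (hu : u ∈ q.1.2) : q.1.1 ∉ Delta Γ := by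
  intro hdel
  have hst : u ∉ star Γ q.1.1 := q.2.subset hu
  exact hst (Or.inr (hdel u fun h => hst (h ▸ Set.mem_insert _ _)))

variable (gen : ∀ v, G v)

/-- The generator `p_{v,C}` of `G_{Γ̃}`, for `p = (v, C)`. -/
abbrev tildeGen (p : TV Γ) : TildeProduct Γ G :=
  of (tilde Γ) (fun p : TV Γ => G p.1.1) (v := p) (gen p.1.1)

theorem commute_tildeGen_of_not_mem (p q : TV Γ) (h : q.1.1 ∉ p.1.2) :
    Commute (tildeGen gen p) (tildeGen gen q) := by
  by_cases hpq : p = q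
  · subst hpq; exact Commute.refl _
  · exact of_commute (tilde Γ) (fun r : TV Γ => G r.1.1)
      ⟨hpq, fun hsep => h hsep.2.2.2⟩ _ _

variable [Finite V]

theorem commute_tildeGen_pvert (p : TV Γ) {u : V} (hu : u ∉ p.1.2) :
    Commute (tildeGen gen p) (pvert Γ G gen u) := by
  have : Fintype {C : Set V // IsCompOf Γ ((star Γ u)ᶜ) C} := Fintype.ofFinite _
  exact Finset.noncommProd_commute _ _ _ _ fun c _ =>
    commute_tildeGen_of_not_mem gen p ⟨(u, c.1), c.2⟩ hu

theorem tildeGen_conj_eq_pvert_conj (q : TV Γ) {y : TildeProduct Γ G}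
    (hy : ∀ D (hD : IsCompOf Γ (star Γ q.1.1)ᶜ D), D ≠ q.1.2 →
      Commute (tildeGen gen ⟨(q.1.1, D), hD⟩) y) :
    tildeGen gen q * y * (tildeGen gen q)⁻¹ =
        pvert Γ G gen q.1.1 * y * (pvert Γ G gen q.1.1)⁻¹ ∧
      (tildeGen gen q)⁻¹ * y * tildeGen gen q =
        (pvert Γ G gen q.1.1)⁻¹ * y * pvert Γ G gen q.1.1 := by
  classical
  let : Fintype {C : Set V // IsCompOf Γ ((star Γ q.1.1)ᶜ) C} := Fintype.ofFinite _
  let c₀ : {C : Set V // IsCompOf Γ ((star Γ q.1.1)ᶜ) C} := ⟨q.1.2, q.2⟩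
  let factor (c : {C : Set V // IsCompOf Γ ((star Γ q.1.1)ᶜ) C}) : TildeProduct Γ G :=
    tildeGen gen ⟨(q.1.1, c.1), c.2⟩
  have hcomm : Set.Pairwise
      ↑(Finset.univ : Finset {C : Set V // IsCompOf Γ ((star Γ q.1.1)ᶜ) C})
      fun a b => Commute (factor a) (factor b) := fun a _ b _ _ =>
    commute_tildeGen_of_not_mem gen _ _ fun h => a.2.subset h (Set.mem_insert _ _)
  set z := (Finset.univ.erase c₀).noncommProd factor
    (hcomm.mono (Finset.coe_subset.mpr (Finset.erase_subset _ _)))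
  have hzy : Commute z y := (Finset.noncommProd_commute _ _ _ _ fun d hd =>
    (hy d.1 d.2 fun h => (Finset.mem_erase.mp hd).1 (Subtype.ext h)).symm).symm
  have hleft : tildeGen gen q * z = pvert Γ G gen q.1.1 :=
    Finset.mul_noncommProd_erase _ (Finset.mem_univ c₀) factor hcomm
  have hright : z * tildeGen gen q = pvert Γ G gen q.1.1 :=
    Finset.noncommProd_erase_mul _ (Finset.mem_univ c₀) factor hcomm
  constructor
  · calc _ = tildeGen gen q * (z * y * z⁻¹) * (tildeGen gen q)⁻¹ := by
          rw [hzy.mul_inv_cancel]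
      _ = _ := by rw [← hleft]; group
  · calc _ = (tildeGen gen q)⁻¹ * (z⁻¹ * y * z) * tildeGen gen q := by
          rw [hzy.inv_left.eq, inv_mul_cancel_right]
      _ = _ := by rw [← hright]; group

def pvertSubgroup : Subgroup (TildeProduct Γ G) :=
  Subgroup.closure (Set.range fun u : ↥(Delta Γ)ᶜ => pvert Γ G gen u.1)

theorem tildeGen_conj_pvert_mem (q : TV Γ) (u : ↥(Delta Γ)ᶜ) :
    tildeGen gen q * pvert Γ G gen u * (tildeGen gen q)⁻¹ ∈ pvertSubgroup gen ∧
    (tildeGen gen q)⁻¹ * pvert Γ G gen u * tildeGen gen q ∈ pvertSubgroup gen := by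
  have hu : pvert Γ G gen u ∈ pvertSubgroup gen := Subgroup.subset_closure ⟨u, rfl⟩
  by_cases huq : u.1 ∈ q.1.2
  · have hv : pvert Γ G gen q.1.1 ∈ pvertSubgroup gen :=
      Subgroup.subset_closure ⟨⟨q.1.1, notMem_delta_of_mem q huq⟩, rfl⟩
    obtain ⟨h₁, h₂⟩ := tildeGen_conj_eq_pvert_conj gen q fun D hD hne =>
      commute_tildeGen_pvert gen _ fun huD => hne (hD.eq_of_mem q.2 huD huq)
    rw [h₁, h₂]
    exact ⟨mul_mem (mul_mem hv hu) (inv_mem hv), mul_mem (mul_mem (inv_mem hv) hu) hv⟩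
  · have hc := commute_tildeGen_pvert gen q huq
    rw [hc.mul_inv_cancel, hc.inv_left.eq, inv_mul_cancel_right]
    exact ⟨hu, hu⟩

end Tilde

theorem ftilde_range_normal_general {V : Type u} [Finite V] (Γ : SimpleGraph V)
    (G : V → Type uG) [∀ v, Group (G v)]
    (gen : ∀ v, G v) (hgen : ∀ v, Subgroup.zpowers (gen v) = ⊤)
    (f : GraphProduct (Γ.induce (Delta Γ)ᶜ) (fun u : ↥(Delta Γ)ᶜ => G u.1) →*
      TildeProduct Γ G)
    (hf : ∀ u : ↥(Delta Γ)ᶜ,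
      f (of (Γ.induce (Delta Γ)ᶜ) (fun x : ↥(Delta Γ)ᶜ => G x.1) (v := u) (gen u.1)) =
        pvert Γ G gen u.1) :
    f.range.Normal := by
  have hrange : f.range = pvertSubgroup gen := by
    rw [MonoidHom.range_eq_map, ← closure_range_of_gen_eq_top (Γ.induce (Delta Γ)ᶜ)
      (fun u : ↥(Delta Γ)ᶜ => G u.1) (fun u => gen u.1) (fun u => hgen u.1),
      MonoidHom.map_closure, ← Set.range_comp]
    exact congrArg (fun s => Subgroup.closure (Set.range s)) (funext hf)
  rw [hrange]
  refine Subgroup.closure_normal_of_conj_mem (closure_range_of_gen_eq_top (tilde Γ)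
    (fun p : TV Γ => G p.1.1) (fun p => gen p.1.1) (fun p => hgen p.1.1)) ?_
  rintro _ ⟨q, rfl⟩ _ ⟨u, rfl⟩
  exact tildeGen_conj_pvert_mem gen q u

/-- The image of the homomorphism `f̃ : G_{Γ₀} → G_{Γ̃}`, `v ↦ p_v`, is a
normal subgroup of `G_{Γ̃}`. -/
theorem ftilde_range_normal {V : Type u} [Finite V] (Γ : SimpleGraph V)
    (hconn : Γ.Connected) (hsil : ¬ HasSIL Γ)
    (G : V → Type uG) [∀ v, Group (G v)] [∀ v, Nontrivial (G v)]
    (gen : ∀ v, G v) (hgen : ∀ v, Subgroup.zpowers (gen v) = ⊤)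
    (f : GraphProduct (Γ.induce (Delta Γ)ᶜ) (fun u : ↥(Delta Γ)ᶜ => G u.1) →*
      TildeProduct Γ G)
    (hf : ∀ u : ↥(Delta Γ)ᶜ,
      f (of (Γ.induce (Delta Γ)ᶜ) (fun x : ↥(Delta Γ)ᶜ => G x.1) (v := u) (gen u.1)) =
        pvert Γ G gen u.1) :
    f.range.Normal :=
  ftilde_range_normal_general Γ G gen hgen f hf

end ArXiv
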